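/- arXiv:2206.07767 — 2 statements merged into one kernel-verified Lean document; each statement's English description precedes it below -/
import Mathlib

section
/- Let D ≥ 1, let N ≥ 1, let a : Fin N → ℝ^D and b : Fin N → ℝ have pairwise distinct centers with ‖a_{n₁} − a_{n₂}‖₂ ≠ |b_{n₁} − b_{n₂}| for all n₁ ≠ n₂, and let u(x) = min over n of (‖x − a_n‖₂ + b_n). Suppose u is Fréchet differentiable at x ∈ ℝ^D and let m be the (unique) index with u(x) = ‖x − a_m‖₂ + b_m. Then x ≠ a_m and the gradient of u at x equals (x − a_m)/‖x − a_m‖₂. -/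
/-!
If the active funnel `m` had its center at `x`, the genericity condition would make every other
funnel strictly larger at `x`, so near `x` the MinFunnel would coincide with the cone
`‖z - a m‖ + b m`, which is not differentiable at its apex. Away from the apex the active funnel is
smooth, lies above the MinFunnel and touches it at `x`; two differentiable functions touching in
this way have the same derivative.
-/

open Filter Topology InnerProductSpace

section Norm

variable {E : Type*} [NormedAddCommGroup E] [NormedSpace ℝ E]
variable {F : Type*} [NormedAddCommGroup F] [InnerProductSpace ℝ F] [CompleteSpace F]

theorem not_differentiableAt_norm_sub_self [Nontrivial E] (c : E) :
    ¬DifferentiableAt ℝ (fun z => ‖z - c‖) c := by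
  rw [differentiableAt_comp_sub (f := norm), sub_self]
  exact not_differentiableAt_norm_zero E

theorem hasGradientAt_norm {x : F} (hx : x ≠ 0) : HasGradientAt (‖·‖) (‖x‖⁻¹ • x) x := by
  have hx' : ‖x‖ ^ 2 ≠ 0 := pow_ne_zero 2 (norm_ne_zero_iff.2 hx)
  have h := (hasStrictFDerivAt_norm_sq x).hasFDerivAt.sqrt hx'
  simp only [Real.sqrt_sq (norm_nonneg _)] at h
  refine hasGradientAt_iff_hasFDerivAt.2 (h.congr_fderiv ?_)
  ext y
  simp only [one_div, mul_inv_rev, smul_apply, coe_innerSL_apply, nsmul_eq_mul,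
    Nat.cast_ofNat, smul_eq_mul, map_smul, toDual_apply_apply]
  field_simp

theorem hasGradientAt_norm_sub {x c : F} (h : x ≠ c) :
    HasGradientAt (fun z => ‖z - c‖) (‖x - c‖⁻¹ • (x - c)) x := by
  rw [hasGradientAt_iff_hasFDerivAt, hasFDerivAt_comp_sub (f := norm)]
  exact (hasGradientAt_norm (sub_ne_zero.2 h)).hasFDerivAt

end Norm

theorem iInf_eventuallyEq_of_lt {ι X : Type*} [Finite ι] [TopologicalSpace X] {f : ι → X → ℝ}
    {x : X} {i : ι} (hf : ∀ j, ContinuousAt (f j) x) (hi : ∀ j ≠ i, f i x < f j x) :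
    (fun z => ⨅ j, f j z) =ᶠ[𝓝 x] f i := by
  have hmin : ∀ᶠ z in 𝓝 x, ∀ j, f i z ≤ f j z := by
    refine eventually_all.2 fun j => ?_
    by_cases hj : j = i
    · exact Eventually.of_forall fun z => hj ▸ le_rfl
    · exact ((hf i).eventually_lt (hf j) (hi j hj)).mono fun z => le_of_lt
  filter_upwards [hmin] with z hz
  have : Nonempty ι := ⟨i⟩
  exact le_antisymm (ciInf_le (Set.finite_range _).bddBelow i) (le_ciInf hz)

theorem HasFDerivAt.of_eventuallyLE_of_eq {E : Type*} [NormedAddCommGroup E] [NormedSpace ℝ E]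
    {f g : E → ℝ} {g' : E →L[ℝ] ℝ} {x : E} (hg : HasFDerivAt g g' x)
    (hf : DifferentiableAt ℝ f x) (hle : f ≤ᶠ[𝓝 x] g) (heq : f x = g x) :
    HasFDerivAt f g' x := by
  have hmin : IsLocalMin (fun z => g z - f z) x :=
    hle.mono fun z hz => by simp only [heq, sub_self, sub_nonneg]; exact hz
  have := hmin.hasFDerivAt_eq_zero (hg.sub hf.hasFDerivAt)
  exact sub_eq_zero.1 this ▸ hf.hasFDerivAt

section MinFunnel

variable {ι E : Type*} [Finite ι] [NormedAddCommGroup E]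
variable (a : ι → E) (b : ι → ℝ)

noncomputable def minFunnel (z : E) : ℝ := ⨅ n, (‖z - a n‖ + b n)

theorem minFunnel_le (z : E) (n : ι) : minFunnel a b z ≤ ‖z - a n‖ + b n :=
  ciInf_le (Set.finite_range _).bddBelow n

variable {a b} {x : E} {m : ι}

theorem ne_center_of_differentiableAt_minFunnel [NormedSpace ℝ E] [Nontrivial E]
    (hgen : ∀ n₁ n₂ : ι, n₁ ≠ n₂ → ‖a n₁ - a n₂‖ ≠ |b n₁ - b n₂|)
    (hdiff : DifferentiableAt ℝ (minFunnel a b) x) (hm : minFunnel a b x = ‖x - a m‖ + b m) :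
    x ≠ a m := by
  rintro rfl
  have hlt : ∀ n ≠ m, ‖a m - a m‖ + b m < ‖a m - a n‖ + b n := by
    intro n hn
    refine (hm ▸ minFunnel_le a b (a m) n).lt_of_ne fun heq => hgen m n hn.symm ?_
    rw [sub_self, norm_zero, zero_add] at heq
    rw [abs_of_nonneg] <;> linarith [norm_nonneg (a m - a n)]
  have hcont : ∀ n, ContinuousAt (fun z => ‖z - a n‖ + b n) (a m) := fun n => by fun_prop
  have hcone := (iInf_eventuallyEq_of_lt hcont hlt).differentiableAt_iff.1 hdiff
  exact not_differentiableAt_norm_sub_self (a m) ((differentiableAt_add_const_iff _).1 hcone)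

theorem hasGradientAt_minFunnel [InnerProductSpace ℝ E] [CompleteSpace E]
    (hdiff : DifferentiableAt ℝ (minFunnel a b) x) (hm : minFunnel a b x = ‖x - a m‖ + b m)
    (hx : x ≠ a m) :
    HasGradientAt (minFunnel a b) (‖x - a m‖⁻¹ • (x - a m)) x :=
  hasGradientAt_iff_hasFDerivAt.2 <|
    ((hasGradientAt_norm_sub hx).hasFDerivAt.add_const (b m)).of_eventuallyLE_of_eq hdiff
      (Eventually.of_forall fun z => minFunnel_le a b z m) hm

end MinFunnel

theorem minFunnel_gradient_general
    (D : ℕ) (hD : 1 ≤ D) (N : ℕ)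
    (a : Fin N → EuclideanSpace ℝ (Fin D)) (b : Fin N → ℝ)
    (hgen : ∀ n₁ n₂ : Fin N, n₁ ≠ n₂ → ‖a n₁ - a n₂‖ ≠ |b n₁ - b n₂|)
    (x : EuclideanSpace ℝ (Fin D))
    (hdiff : DifferentiableAt ℝ (fun z => ⨅ n : Fin N, (‖z - a n‖ + b n)) x)
    (m : Fin N)
    (hm : (⨅ n : Fin N, (‖x - a n‖ + b n)) = ‖x - a m‖ + b m) :
    x ≠ a m ∧
    gradient (fun z => ⨅ n : Fin N, (‖z - a n‖ + b n)) x
      = ‖x - a m‖⁻¹ • (x - a m) := by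
  have : Nonempty (Fin D) := ⟨⟨0, hD⟩⟩
  have hx : x ≠ a m := ne_center_of_differentiableAt_minFunnel hgen hdiff hm
  exact ⟨hx, (hasGradientAt_minFunnel hdiff hm hx).gradient⟩

/-- At a differentiability point of a MinFunnel with generic parameters, the
gradient is the unit vector pointing away from the active funnel's center. -/
theorem minFunnel_gradient
    (D : ℕ) (hD : 1 ≤ D) (N : ℕ) (hN : 1 ≤ N)
    (a : Fin N → EuclideanSpace ℝ (Fin D)) (b : Fin N → ℝ)
    (hdist : ∀ n₁ n₂ : Fin N, n₁ ≠ n₂ → a n₁ ≠ a n₂)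
    (hgen : ∀ n₁ n₂ : Fin N, n₁ ≠ n₂ → ‖a n₁ - a n₂‖ ≠ |b n₁ - b n₂|)
    (x : EuclideanSpace ℝ (Fin D))
    (hdiff : DifferentiableAt ℝ (fun z => ⨅ n : Fin N, (‖z - a n‖ + b n)) x)
    (m : Fin N)
    (hm : (⨅ n : Fin N, (‖x - a n‖ + b n)) = ‖x - a m‖ + b m) :
    x ≠ a m ∧
    gradient (fun z => ⨅ n : Fin N, (‖z - a n‖ + b n)) x
      = ‖x - a m‖⁻¹ • (x - a m) :=
  minFunnel_gradient_general D hD N a b hgen x hdiff m hm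
end

section
/- Let D ≥ 1, let P be a Borel probability measure on ℝ^D with finite first moment that is absolutely continuous with respect to Lebesgue measure, let u : ℝ^D → ℝ be 1-Lipschitz, and let T : ℝ^D → ℝ^D be a measurable map such that Q = T♯P has finite first moment, u(x) − u(T(x)) = ‖x − T(x)‖₂ holds for P-almost every x, and T(x) ≠ x for P-almost every x. Let f : ℝ^D → ℝ be any 1-Lipschitz function satisfying ∫ f(x) dP(x) − ∫ f(y) dQ(y) = ∫ ‖x − T(x)‖₂ dP(x). Then for P-almost every x, both f and u are Fréchet differentiable at x and their gradients satisfy ∇f(x) = ∇u(x) = (x − T(x))/‖x − T(x)‖₂; in particular, the OT gradient is P-unique. -/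
/-!
If `f` is 1-Lipschitz and `f x - f y = ‖x - y‖` with `y ≠ x`, then `f` decreases at the
maximal rate along the segment from `x` to `y`, so at a point of differentiability its
gradient, a vector of norm at most one, has inner product `‖x - y‖` with `x - y`; equality in
Cauchy–Schwarz forces `∇f x = (x - y) / ‖x - y‖`. An optimal Kantorovich potential `f` attains
its pointwise bound `f x - f (T x) ≤ ‖x - T x‖` with equality for `P`-a.e. `x`, as does `u` by
assumption, and both are differentiable `P`-a.e. by Rademacher's theorem.
-/

open MeasureTheory InnerProductSpace AffineMap

theorem eq_inv_norm_smul_of_norm_le_one_of_inner_eq_norm {F : Type*} [NormedAddCommGroup F]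
    [InnerProductSpace ℝ F] {v w : F} (hv : ‖v‖ ≤ 1) (hw : w ≠ 0) (h : ⟪v, w⟫_ℝ = ‖w‖) :
    v = ‖w‖⁻¹ • w := by
  have hw_pos : 0 < ‖w‖ := norm_pos_iff.2 hw
  have hsq : ‖v - ‖w‖⁻¹ • w‖ ^ 2 ≤ 0 := by
    rw [norm_sub_sq_real, real_inner_smul_right, h, norm_smul, norm_inv, norm_norm,
      inv_mul_cancel₀ hw_pos.ne']
    nlinarith [norm_nonneg v]
  exact sub_eq_zero.1 (norm_eq_zero.1 (pow_eq_zero_iff two_ne_zero |>.1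
    (le_antisymm hsq (sq_nonneg _))))

namespace LipschitzWith

section Segment

variable {E : Type*} [NormedAddCommGroup E] [NormedSpace ℝ E] {g : E → ℝ} {x y : E}

theorem apply_lineMap_of_sub_eq_dist (hg : LipschitzWith 1 g) (h : g x - g y = dist x y)
    {t : ℝ} (ht : t ∈ Set.Icc (0 : ℝ) 1) : g (lineMap x y t) = g x - t * dist x y := by
  have h₁ := hg.le_add_mul x (lineMap x y t)
  have h₂ := hg.le_add_mul (lineMap x y t) y
  rw [dist_comm, dist_lineMap_left, Real.norm_of_nonneg ht.1] at h₁
  rw [dist_lineMap_right, Real.norm_of_nonneg (sub_nonneg.2 ht.2)] at h₂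
  push_cast at h₁ h₂
  linarith

theorem fderiv_apply_sub_of_sub_eq_dist (hg : LipschitzWith 1 g) (h : g x - g y = dist x y)
    (hd : DifferentiableAt ℝ g x) : fderiv ℝ g x (y - x) = -dist x y := by
  have hcomp : HasDerivAt (g ∘ (lineMap x y : ℝ → E)) (fderiv ℝ g x (y - x)) 0 := by
    have hx : HasFDerivAt g (fderiv ℝ g x) (lineMap x y (0 : ℝ)) := by
      rw [lineMap_apply_zero]
      exact hd.hasFDerivAt
    exact hx.comp_hasDerivAt 0 hasDerivAt_lineMap
  have haffine : HasDerivWithinAt (g ∘ (lineMap x y : ℝ → E)) (-dist x y) (Set.Icc 0 1) 0 :=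
    ((hasDerivAt_mul_const (dist x y)).const_sub (g x)).hasDerivWithinAt.congr
      (fun t ht => hg.apply_lineMap_of_sub_eq_dist h ht) (by simp)
  exact (uniqueDiffOn_Icc_zero_one 0 ⟨le_rfl, zero_le_one⟩).eq_deriv _
    hcomp.hasDerivWithinAt haffine

end Segment

theorem gradient_eq_of_sub_eq_norm_sub {F : Type*} [NormedAddCommGroup F]
    [InnerProductSpace ℝ F] [CompleteSpace F] {g : F → ℝ} (hg : LipschitzWith 1 g) {x y : F}
    (hxy : x ≠ y) (h : g x - g y = ‖x - y‖) (hd : DifferentiableAt ℝ g x) :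
    gradient g x = ‖x - y‖⁻¹ • (x - y) := by
  refine eq_inv_norm_smul_of_norm_le_one_of_inner_eq_norm ?_ (sub_ne_zero.2 hxy) ?_
  · rw [gradient, LinearIsometryEquiv.norm_map]
    simpa using norm_fderiv_le_of_lipschitz ℝ hg (x₀ := x)
  · rw [← dist_eq_norm] at h ⊢
    rw [inner_gradient_left, ← neg_sub, map_neg, hg.fderiv_apply_sub_of_sub_eq_dist h hd, neg_neg]

section Integral

variable {E : Type*} [NormedAddCommGroup E] [MeasurableSpace E] [OpensMeasurableSpace E]
  {μ : Measure E} [IsFiniteMeasure μ]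

theorem integrable_of_integrable_norm {K : NNReal} {g : E → ℝ} (hg : LipschitzWith K g)
    (hμ : Integrable (fun x => ‖x‖) μ) : Integrable g μ := by
  refine ((integrable_const |g 0|).add (hμ.const_mul K)).mono'
    hg.continuous.aestronglyMeasurable (ae_of_all _ fun x => ?_)
  have := hg.dist_le_mul x 0
  rw [dist_zero_right, Real.dist_eq] at this
  show |g x| ≤ |g 0| + K * ‖x‖
  linarith [abs_sub_abs_le_abs_sub (g x) (g 0)]

theorem ae_sub_comp_eq_norm_sub_of_integral_sub_map_eq [SecondCountableTopology E]
    {f : E → ℝ} (hf : LipschitzWith 1 f) {T : E → E} (hT : AEMeasurable T μ)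
    (hμ : Integrable (fun x => ‖x‖) μ) (hTμ : Integrable (fun y => ‖y‖) (μ.map T))
    (hopt : ∫ x, f x ∂μ - ∫ y, f y ∂(μ.map T) = ∫ x, ‖x - T x‖ ∂μ) :
    ∀ᵐ x ∂μ, f x - f (T x) = ‖x - T x‖ := by
  have hid : Integrable id μ := (integrable_norm_iff aestronglyMeasurable_id).1 hμ
  have hTint : Integrable T μ := (integrable_map_measure aestronglyMeasurable_id hT).1
    ((integrable_norm_iff aestronglyMeasurable_id).1 hTμ)
  have hfμ : Integrable f μ := hf.integrable_of_integrable_norm hμ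
  have hfT : Integrable (fun x => f (T x)) μ :=
    (integrable_map_measure hf.continuous.aestronglyMeasurable hT).1
      (hf.integrable_of_integrable_norm hTμ)
  have hbound : ∀ x, f x - f (T x) ≤ ‖x - T x‖ := fun x => by
    have := hf.le_add_mul x (T x)
    rw [NNReal.coe_one, one_mul, dist_eq_norm] at this
    linarith
  have hint : ∫ x, f x - f (T x) ∂μ = ∫ x, ‖x - T x‖ ∂μ := by
    rw [integral_sub hfμ hfT, ← hopt, integral_map hT hf.continuous.aestronglyMeasurable]
  exact (integral_eq_iff_of_ae_le (hfμ.sub hfT) (hid.sub hTint).norm (ae_of_all _ hbound)).1 hint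

end Integral

end LipschitzWith

theorem ot_gradient_unique_general
    (D : ℕ)
    (P : Measure (EuclideanSpace ℝ (Fin D))) [IsProbabilityMeasure P]
    (hPac : P ≪ (volume : Measure (EuclideanSpace ℝ (Fin D))))
    (hPmom : Integrable (fun x => ‖x‖) P)
    (u : EuclideanSpace ℝ (Fin D) → ℝ) (hu : LipschitzWith 1 u)
    (T : EuclideanSpace ℝ (Fin D) → EuclideanSpace ℝ (Fin D))
    (hT : Measurable T)
    (hQmom : Integrable (fun y => ‖y‖) (P.map T))
    (hmon : ∀ᵐ x ∂P, u x - u (T x) = ‖x - T x‖)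
    (hmove : ∀ᵐ x ∂P, T x ≠ x)
    (f : EuclideanSpace ℝ (Fin D) → ℝ) (hf : LipschitzWith 1 f)
    (hopt : ∫ x, f x ∂P - ∫ y, f y ∂(P.map T) = ∫ x, ‖x - T x‖ ∂P) :
    ∀ᵐ x ∂P, DifferentiableAt ℝ f x ∧ DifferentiableAt ℝ u x ∧
      gradient f x = ‖x - T x‖⁻¹ • (x - T x) ∧
      gradient u x = ‖x - T x‖⁻¹ • (x - T x) := by
  have hfray :=
    hf.ae_sub_comp_eq_norm_sub_of_integral_sub_map_eq hT.aemeasurable hPmom hQmom hopt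
  filter_upwards [hfray, hmon, hmove, hPac.ae_le hf.ae_differentiableAt,
    hPac.ae_le hu.ae_differentiableAt] with x hfx hux hTx hdf hdu
  exact ⟨hdf, hdu, hf.gradient_eq_of_sub_eq_norm_sub hTx.symm hfx hdf,
    hu.gradient_eq_of_sub_eq_norm_sub hTx.symm hux hdu⟩

/-- Uniqueness of the OT gradient: for absolutely continuous `P` and a
mass-moving ray monotone map `T`, every 1-Lipschitz maximizer `f` of the
Kantorovich dual has `P`-a.e. the same gradient as `u`, namely the unit
vector `(x - T x)/‖x - T x‖`. -/
theorem ot_gradient_unique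
    (D : ℕ) (hD : 1 ≤ D)
    (P : Measure (EuclideanSpace ℝ (Fin D))) [IsProbabilityMeasure P]
    (hPac : P ≪ (volume : Measure (EuclideanSpace ℝ (Fin D))))
    (hPmom : Integrable (fun x => ‖x‖) P)
    (u : EuclideanSpace ℝ (Fin D) → ℝ) (hu : LipschitzWith 1 u)
    (T : EuclideanSpace ℝ (Fin D) → EuclideanSpace ℝ (Fin D))
    (hT : Measurable T)
    (hQmom : Integrable (fun y => ‖y‖) (P.map T))
    (hmon : ∀ᵐ x ∂P, u x - u (T x) = ‖x - T x‖)
    (hmove : ∀ᵐ x ∂P, T x ≠ x)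
    (f : EuclideanSpace ℝ (Fin D) → ℝ) (hf : LipschitzWith 1 f)
    (hopt : ∫ x, f x ∂P - ∫ y, f y ∂(P.map T) = ∫ x, ‖x - T x‖ ∂P) :
    ∀ᵐ x ∂P, DifferentiableAt ℝ f x ∧ DifferentiableAt ℝ u x ∧
      gradient f x = ‖x - T x‖⁻¹ • (x - T x) ∧
      gradient u x = ‖x - T x‖⁻¹ • (x - T x) :=
  ot_gradient_unique_general D P hPac hPmom u hu T hT hQmom hmon hmove f hf hopt
end
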